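/- Let 𝐟 = f₁ ⊕ ⋯ ⊕ f_m on X^m and R the circular right shift. The dual solution set G = {y : 0 ∈ (∂𝐟)^{-1}(y) + (Id − R)^{-1}(y)} contains at most one element. -/

import Mathlib

open scoped RealInnerProductSpace

variable {X : Type*} [NormedAddCommGroup X] [InnerProductSpace ℝ X] [CompleteSpace X]
variable {m : ℕ} [NeZero m]

/-- The convex subdifferential. -/
def SubdiffAt {Y : Type*} [NormedAddCommGroup Y] [InnerProductSpace ℝ Y]
    (f : Y → EReal) (x : Y) : Set Y :=
  {u | ∀ y, f x + ((⟪u, y - x⟫ : ℝ) : EReal) ≤ f y}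

/-- A proper function: never `⊥` and not identically `⊤`. -/
def ProperE {Y : Type*} [NormedAddCommGroup Y] [InnerProductSpace ℝ Y]
    (f : Y → EReal) : Prop := (∀ x, f x ≠ ⊥) ∧ ∃ x, f x ≠ ⊤

/-- Convexity for extended-real-valued functions. -/
def EConvex {Y : Type*} [NormedAddCommGroup Y] [InnerProductSpace ℝ Y]
    (f : Y → EReal) : Prop :=
  ∀ x y : Y, ∀ a b : ℝ, 0 ≤ a → 0 ≤ b → a + b = 1 →
    f (a • x + b • y) ≤ (a : EReal) * f x + (b : EReal) * f y

/-- Membership in `Γ₀`. -/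
def Gamma0 {Y : Type*} [NormedAddCommGroup Y] [InnerProductSpace ℝ Y]
    (f : Y → EReal) : Prop := ProperE f ∧ LowerSemicontinuous f ∧ EConvex f

/-- The separable sum `𝐟 = f₁ ⊕ ⋯ ⊕ f_m` on `X^m`. -/
noncomputable def sepSum (f : Fin m → X → EReal) :
    PiLp 2 (fun _ : Fin m => X) → EReal := fun x => ∑ i, f i (x i)

/-- The circular right shift on `X^m`. -/
def shiftR : PiLp 2 (fun _ : Fin m => X) → PiLp 2 (fun _ : Fin m => X) :=
  fun x => WithLp.toLp 2 (fun j => x (j - 1))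

/-- The dual solution set `G = {y : 0 ∈ (∂𝐟)⁻¹(y) + (Id − R)⁻¹(y)}`. -/
def dualGap (f : Fin m → X → EReal) : Set (PiLp 2 (fun _ : Fin m => X)) :=
  {y | ∃ a b : PiLp 2 (fun _ : Fin m => X),
      y ∈ SubdiffAt (sepSum f) a ∧ b - shiftR b = y ∧ a + b = 0}

/-!
If `y = (Id - R) b` and `y' = (Id - R) b'` are subgradients of `𝐟` at `-b` and `-b'`, monotonicity of
`∂𝐟` gives `⟪y - y', b - b'⟫ ≤ 0`. Since `R` is a linear isometry, with `u = b - b'` one has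
`⟪u - R u, u⟫ = ‖u - R u‖² / 2 = ‖y - y'‖² / 2`, hence `y = y'`.
-/

lemma EReal.sum_ne_bot {ι : Type*} (s : Finset ι) {g : ι → EReal} (h : ∀ i ∈ s, g i ≠ ⊥) :
    ∑ i ∈ s, g i ≠ ⊥ :=
  Finset.sum_induction g (· ≠ ⊥) (fun _ _ ha hb => EReal.add_ne_bot_iff.mpr ⟨ha, hb⟩)
    EReal.zero_ne_bot h

lemma EReal.sum_ne_top {ι : Type*} (s : Finset ι) {g : ι → EReal} (h : ∀ i ∈ s, g i ≠ ⊤) :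
    ∑ i ∈ s, g i ≠ ⊤ :=
  Finset.sum_induction g (· ≠ ⊤) (fun _ _ ha hb => (EReal.add_lt_top ha hb).ne)
    EReal.zero_ne_top h

section Subdifferential

variable {Y : Type*} [NormedAddCommGroup Y] [InnerProductSpace ℝ Y]

lemma SubdiffAt.ne_top {f : Y → EReal} (hf : ∃ z, f z ≠ ⊤) {x u : Y} (hu : u ∈ SubdiffAt f x) :
    f x ≠ ⊤ := by
  obtain ⟨z, hz⟩ := hf
  intro hx
  have := hu z
  rw [hx, EReal.top_add_of_ne_bot (EReal.coe_ne_bot _), top_le_iff] at this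
  exact hz this

lemma SubdiffAt.inner_sub_nonneg {f : Y → EReal} (hf : ProperE f) {x x' u u' : Y}
    (hu : u ∈ SubdiffAt f x) (hu' : u' ∈ SubdiffAt f x') : 0 ≤ ⟪u - u', x - x'⟫ := by
  have hx : ((f x).toReal : EReal) = f x :=
    EReal.coe_toReal (SubdiffAt.ne_top hf.2 hu) (hf.1 x)
  have hx' : ((f x').toReal : EReal) = f x' :=
    EReal.coe_toReal (SubdiffAt.ne_top hf.2 hu') (hf.1 x')
  have h := hu x'
  have h' := hu' x
  rw [← hx, ← hx', ← EReal.coe_add, EReal.coe_le_coe_iff] at h h'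
  simp only [inner_sub_left, inner_sub_right] at h h' ⊢
  linarith

end Subdifferential

lemma real_inner_sub_self_left_eq_half_norm_sq {E : Type*} [NormedAddCommGroup E]
    [InnerProductSpace ℝ E] {u v : E} (h : ‖v‖ = ‖u‖) : ⟪u - v, u⟫ = ‖u - v‖ ^ 2 / 2 := by
  rw [norm_sub_sq_real, inner_sub_left, real_inner_self_eq_norm_sq, real_inner_comm, h]
  ring

lemma ProperE.sepSum {E : Type*} [NormedAddCommGroup E] [InnerProductSpace ℝ E] {n : ℕ}
    {f : Fin n → E → EReal} (hf : ∀ i, ProperE (f i)) : ProperE (sepSum f) := by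
  choose w hw using fun i => (hf i).2
  exact ⟨fun x => EReal.sum_ne_bot _ fun i _ => (hf i).1 (x i),
    WithLp.toLp 2 w, EReal.sum_ne_top _ fun i _ => hw i⟩

section Shift

variable {E : Type*} [NormedAddCommGroup E] {n : ℕ} [NeZero n]

lemma shiftR_sub (x y : PiLp 2 (fun _ : Fin n => E)) : shiftR (x - y) = shiftR x - shiftR y :=
  rfl

lemma norm_shiftR (x : PiLp 2 (fun _ : Fin n => E)) : ‖shiftR x‖ = ‖x‖ := by
  simp only [PiLp.norm_eq_of_L2, shiftR]
  congr 1
  exact Fintype.sum_equiv (Equiv.subRight 1) _ _ fun _ => rfl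

end Shift

/-- The dual solution set contains at most one element. -/
theorem stmt_18 (f : Fin m → X → EReal) (hf : ∀ i, Gamma0 (f i)) :
    (dualGap f).Subsingleton := by
  rintro y ⟨a, b, ha, rfl, hab⟩ y' ⟨a', b', ha', rfl, hab'⟩
  have hmono := SubdiffAt.inner_sub_nonneg (ProperE.sepSum fun i => (hf i).1) ha ha'
  have ha_sub : a - a' = -(b - b') := by
    rw [eq_neg_of_add_eq_zero_left hab, eq_neg_of_add_eq_zero_left hab']
    abel
  have hy_sub : b - shiftR b - (b' - shiftR b') = b - b' - shiftR (b - b') := by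
    rw [shiftR_sub]
    abel
  rw [ha_sub, hy_sub, inner_neg_right,
    real_inner_sub_self_left_eq_half_norm_sq (norm_shiftR _)] at hmono
  have hnorm : ‖b - b' - shiftR (b - b')‖ = 0 := by
    nlinarith [norm_nonneg (b - b' - shiftR (b - b'))]
  rw [← sub_eq_zero, hy_sub]
  exact norm_eq_zero.mp hnorm
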